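/- For every Borel probability measure P on ℝ, every 1 ≤ p < ∞, every M ≥ 0, every X ∈ L^p(ℝ, Borel, P), and every ε > 0, there exists a bounded Borel function Y : ℝ → ℝ such that ‖Y − X‖_{L^p(P)} < ε, Y is differentiable at all points of ℝ outside a countable set, and |Y'(x)| > M at every point x where Y is differentiable. -/

import Mathlib

/-!
Approximate `X` in `Lᵖ(P)` by a compactly supported `C¹` function `g`; its derivative is bounded
by some `L`. Adding the sawtooth `x ↦ δ * fract (K * x / δ)`, of height `δ` and slope
`K > |M| + L`, moves `g` by at most `δ` uniformly, hence little in `Lᵖ(P)`. Off the countable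
set of jumps the sum has derivative `g' + K`, of modulus `> M`; at a jump it is not even
continuous.
-/

open MeasureTheory Set Filter Topology
open scoped ENNReal

section SmoothApproximation

variable {α E F : Type*} [MeasurableSpace α] [NormedAddCommGroup F]

theorem exists_pos_eLpNorm_le_of_forall_norm_le (μ : Measure α) [IsFiniteMeasure μ]
    (p : ℝ≥0∞) {ε : ℝ≥0∞} (hε : ε ≠ 0) :
    ∃ η > 0, ∀ f : α → F, (∀ x, ‖f x‖ ≤ η) → eLpNorm f p μ ≤ ε := by
  have hlim :
      Tendsto (fun η => μ univ ^ p.toReal⁻¹ * ENNReal.ofReal η) (𝓝[>] 0) (𝓝 0) := by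
    simpa using ENNReal.Tendsto.const_mul
      (ENNReal.tendsto_ofReal (tendsto_nhdsWithin_of_tendsto_nhds (tendsto_id (x := 𝓝 0))))
      (Or.inr (ENNReal.rpow_ne_top_of_nonneg (inv_nonneg.2 ENNReal.toReal_nonneg)
        (measure_ne_top μ univ)))
  obtain ⟨η, hη, hηpos⟩ :=
    ((hlim.eventually (gt_mem_nhds hε.bot_lt)).and self_mem_nhdsWithin).exists
  exact ⟨η, hηpos, fun f hf =>
    (eLpNorm_le_of_ae_bound (Eventually.of_forall hf)).trans hη.le⟩

variable [NormedAddCommGroup E] [NormedSpace ℝ E] [FiniteDimensional ℝ E]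
  [MeasurableSpace E] [BorelSpace E] [NormedSpace ℝ F]

theorem MeasureTheory.MemLp.exists_contDiff_hasCompactSupport_eLpNorm_sub_le
    {μ : Measure E} [IsFiniteMeasure μ] {p : ℝ≥0∞} (hp1 : 1 ≤ p) (hp : p ≠ ∞)
    {f : E → F} (hf : MemLp f p μ) {ε : ℝ≥0∞} (hε : ε ≠ 0) (n : ℕ∞) :
    ∃ g : E → F, ContDiff ℝ n g ∧ HasCompactSupport g ∧ eLpNorm (f - g) p μ ≤ ε := by
  have hε2 : ε / 2 ≠ 0 := (ENNReal.half_pos hε).ne'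
  obtain ⟨g₀, hg₀_supp, hfg₀, hg₀, -⟩ := hf.exists_hasCompactSupport_eLpNorm_sub_le hp hε2
  obtain ⟨η, hη, hsmall⟩ := exists_pos_eLpNorm_le_of_forall_norm_le (F := F) μ p hε2
  obtain ⟨g, hg, hgg₀, hsupp⟩ := hg₀.exists_contDiff_approx n continuous_const fun _ => hη
  refine ⟨g, hg, hg₀_supp.mono hsupp, ?_⟩
  calc eLpNorm (f - g) p μ
      = eLpNorm ((f - g₀) + (g₀ - g)) p μ := by rw [sub_add_sub_cancel]
    _ ≤ eLpNorm (f - g₀) p μ + eLpNorm (g₀ - g) p μ :=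
      eLpNorm_add_le (hf.1.sub hg₀.aestronglyMeasurable)
        (hg₀.sub hg.continuous).aestronglyMeasurable hp1
    _ ≤ ε / 2 + ε / 2 := by
      gcongr
      exact hsmall _ fun x => by simpa [dist_eq_norm'] using (hgg₀ x).le
    _ = ε := ENNReal.add_halves ε

end SmoothApproximation

section Sawtooth

theorem hasDerivAt_fract {x : ℝ} (hx : x ∉ range ((↑) : ℤ → ℝ)) :
    HasDerivAt (Int.fract : ℝ → ℝ) 1 x := by
  have hlt : (⌊x⌋ : ℝ) < x := (Int.floor_le x).lt_of_ne fun h => hx ⟨_, h⟩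
  have hfloor : ∀ᶠ y : ℝ in 𝓝 x, Int.fract y = y - ⌊x⌋ := by
    filter_upwards [Ioo_mem_nhds hlt (Int.lt_floor_add_one x)] with y hy
    rw [Int.fract, Int.floor_eq_iff.2 ⟨hy.1.le, hy.2⟩]
  exact ((hasDerivAt_id x).sub_const _).congr_of_eventuallyEq hfloor

theorem not_continuousAt_fract (n : ℤ) : ¬ ContinuousAt (Int.fract : ℝ → ℝ) n := fun h =>
  zero_ne_one <| tendsto_nhds_unique
    ((Int.fract_intCast (R := ℝ) n ▸ h.tendsto).mono_left nhdsWithin_le_nhds)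
    (tendsto_fract_left' n)

noncomputable def sawtooth (a k x : ℝ) : ℝ := a * Int.fract (k * x)

variable {a k : ℝ}

theorem measurable_sawtooth : Measurable (sawtooth a k) :=
  (measurable_fract.comp (measurable_const_mul k)).const_mul a

theorem abs_sawtooth_le (ha : 0 ≤ a) (x : ℝ) : |sawtooth a k x| ≤ a := by
  rw [sawtooth, abs_mul, abs_of_nonneg ha, abs_of_nonneg (Int.fract_nonneg _)]
  exact mul_le_of_le_one_right ha (Int.fract_lt_one _).le

theorem hasDerivAt_sawtooth {x : ℝ} (hx : k * x ∉ range ((↑) : ℤ → ℝ)) :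
    HasDerivAt (sawtooth a k) (a * k) x := by
  unfold sawtooth
  simpa using ((hasDerivAt_fract hx).comp x ((hasDerivAt_id x).const_mul k)).const_mul a

theorem not_continuousAt_sawtooth (ha : a ≠ 0) (hk : k ≠ 0) {x : ℝ}
    (hx : k * x ∈ range ((↑) : ℤ → ℝ)) : ¬ ContinuousAt (sawtooth a k) x := by
  obtain ⟨n, hn⟩ := hx
  intro h
  refine not_continuousAt_fract n ?_
  have hcomp : ContinuousAt (fun y => a⁻¹ * sawtooth a k (k⁻¹ * y)) (n : ℝ) :=
    continuousAt_const.mul (h.comp_of_eq (continuous_const_mul _).continuousAt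
      (by rw [hn, inv_mul_cancel_left₀ hk]))
  convert hcomp using 1
  ext y
  simp [sawtooth, ha, hk]

end Sawtooth

theorem exists_small_add_abs_deriv_gt {h : ℝ → ℝ} (hh : Differentiable ℝ h)
    {L : ℝ} (hL : ∀ x, |deriv h x| ≤ L) (M : ℝ) {δ : ℝ} (hδ : 0 < δ) :
    ∃ s : ℝ → ℝ, Measurable s ∧ (∀ x, |s x| ≤ δ) ∧
      (∃ S : Set ℝ, S.Countable ∧ ∀ x ∉ S, DifferentiableAt ℝ (h + s) x) ∧
      ∀ x, DifferentiableAt ℝ (h + s) x → M < |deriv (h + s) x| := by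
  set K := |M| + L + 1
  have hK : 0 < K := by linarith [abs_nonneg M, (abs_nonneg _).trans (hL 0)]
  have hk : K / δ ≠ 0 := by positivity
  set S := (fun x => K / δ * x) ⁻¹' range ((↑) : ℤ → ℝ)
  have hderiv : ∀ x ∉ S, HasDerivAt (h + sawtooth δ (K / δ)) (deriv h x + K) x :=
    fun x hx => by simpa [mul_div_cancel₀ K hδ.ne'] using
      (hh x).hasDerivAt.add (hasDerivAt_sawtooth (a := δ) hx)
  refine ⟨sawtooth δ (K / δ), measurable_sawtooth, abs_sawtooth_le hδ.le,
    ⟨S, (countable_range _).preimage (mul_right_injective₀ hk),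
      fun x hx => (hderiv x hx).differentiableAt⟩, fun x hx => ?_⟩
  by_cases hxS : x ∈ S
  · refine absurd ?_ (not_continuousAt_sawtooth hδ.ne' hk hxS)
    simpa using (hx.sub (hh x)).continuousAt
  · rw [(hderiv x hxS).deriv]
    have := abs_sub_abs_le_abs_sub K (-deriv h x)
    rw [abs_neg, sub_neg_eq_add, add_comm] at this
    linarith [le_abs_self M, abs_of_pos hK, hL x]

theorem stmt_7_general (P : Measure ℝ) [IsProbabilityMeasure P]
    (p : ℝ) (hp : 1 ≤ p) (M : ℝ)
    (X : ℝ → ℝ) (hX : MemLp X (ENNReal.ofReal p) P)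
    (ε : ℝ) (hε : 0 < ε) :
    ∃ Y : ℝ → ℝ, Measurable Y ∧ (∃ C : ℝ, ∀ x, |Y x| ≤ C) ∧
      eLpNorm (Y - X) (ENNReal.ofReal p) P < ENNReal.ofReal ε ∧
      (∃ S : Set ℝ, S.Countable ∧ ∀ x ∉ S, DifferentiableAt ℝ Y x) ∧
      (∀ x : ℝ, DifferentiableAt ℝ Y x → |deriv Y x| > M) := by
  have hp1 : 1 ≤ ENNReal.ofReal p := by simpa using ENNReal.ofReal_le_ofReal hp
  obtain ⟨g, hg, hg_supp, hXg⟩ := hX.exists_contDiff_hasCompactSupport_eLpNorm_sub_le hp1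
    ENNReal.ofReal_ne_top (ENNReal.ofReal_pos.2 (half_pos hε)).ne' 1
  obtain ⟨C, hC⟩ := hg_supp.exists_bound_of_continuous hg.continuous
  obtain ⟨L, hL⟩ := hg_supp.deriv.exists_bound_of_continuous (hg.continuous_deriv le_rfl)
  obtain ⟨s, hs, hs_le, hdiff, hderiv⟩ :=
    exists_small_add_abs_deriv_gt (hg.differentiable one_ne_zero) hL M (by positivity : 0 < ε / 4)
  refine ⟨g + s, hg.continuous.measurable.add hs, ⟨C + ε / 4, fun x => ?_⟩, ?_, hdiff, hderiv⟩
  · exact (abs_add_le _ _).trans (add_le_add (hC x) (hs_le x))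
  have hs_Lp : eLpNorm s (ENNReal.ofReal p) P ≤ ENNReal.ofReal (ε / 4) := by
    simpa using eLpNorm_le_of_ae_bound (μ := P) (p := ENNReal.ofReal p)
      (Eventually.of_forall hs_le)
  calc eLpNorm (g + s - X) (ENNReal.ofReal p) P
      = eLpNorm (s + (g - X)) (ENNReal.ofReal p) P := by rw [add_sub_assoc', add_comm s]
    _ ≤ eLpNorm s (ENNReal.ofReal p) P + eLpNorm (g - X) (ENNReal.ofReal p) P :=
        eLpNorm_add_le hs.aestronglyMeasurable
          (hg.continuous.aestronglyMeasurable.sub hX.1) hp1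
    _ ≤ ENNReal.ofReal (ε / 4) + ENNReal.ofReal (ε / 2) := by
        rw [eLpNorm_sub_comm]
        exact add_le_add hs_Lp hXg
    _ < ENNReal.ofReal ε := by
        rw [← ENNReal.ofReal_add (by positivity) (by positivity),
          ENNReal.ofReal_lt_ofReal_iff hε]
        linarith

theorem stmt_7 (P : Measure ℝ) [IsProbabilityMeasure P]
    (p : ℝ) (hp : 1 ≤ p) (M : ℝ) (hM : 0 ≤ M)
    (X : ℝ → ℝ) (hX : MemLp X (ENNReal.ofReal p) P)
    (ε : ℝ) (hε : 0 < ε) :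
    ∃ Y : ℝ → ℝ, Measurable Y ∧ (∃ C : ℝ, ∀ x, |Y x| ≤ C) ∧
      eLpNorm (Y - X) (ENNReal.ofReal p) P < ENNReal.ofReal ε ∧
      (∃ S : Set ℝ, S.Countable ∧ ∀ x ∉ S, DifferentiableAt ℝ Y x) ∧
      (∀ x : ℝ, DifferentiableAt ℝ Y x → |deriv Y x| > M) :=
  stmt_7_general P p hp M X hX ε hε
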